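/- arXiv:2505.11093 — 2 statements merged into one kernel-verified Lean document; each statement's English description precedes it below -/
import Mathlib

section
/- Let T ⊂ ℝⁿ be a set whose diameter is at most 1. Then for every point x in the convex hull of T and every positive integer s, there exist points x₁, …, x_s ∈ T (not necessarily distinct) such that ‖x − (1/s) ∑_{i=1}^s x_i‖₂ ≤ 1/√s. -/
noncomputable def l2 {ι : Type*} [Fintype ι] (v : ι → ℝ) : ℝ :=
  Real.sqrt (∑ j, (v j)^2)

/-! Maurey's argument, derandomized: build the sample one point at a time, keeping
`‖s • x - (p₁ + ⋯ + pₛ)‖² ≤ s r²`, where `r` bounds the distance from `x` to the points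
of `T`. Given the current error `a`, some `t ∈ T` has `⟪a, x - t⟫ ≤ 0` because `x` lies
in the convex hull of `T`; adding `t` then increases the squared error by at most
`‖x - t‖² ≤ r²`, the cross term (zero on average in the random version) being
nonpositive. -/

open RealInnerProductSpace

section Maurey

variable {E : Type*} [NormedAddCommGroup E] [InnerProductSpace ℝ E] {T : Set E} {x : E}

lemma exists_inner_sub_nonpos_of_mem_convexHull (hx : x ∈ convexHull ℝ T) (a : E) :
    ∃ t ∈ T, ⟪a, x - t⟫ ≤ 0 := by
  obtain ⟨t, ht, hle⟩ := (innerSL ℝ a).toLinearMap.convexOn convex_univ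
    |>.exists_ge_of_mem_convexHull (Set.subset_univ T) hx
  exact ⟨t, ht, by simpa [inner_sub_right] using hle⟩

lemma exists_norm_add_sub_sq_le_of_mem_convexHull (hx : x ∈ convexHull ℝ T) (a : E) :
    ∃ t ∈ T, ‖a + (x - t)‖ ^ 2 ≤ ‖a‖ ^ 2 + ‖x - t‖ ^ 2 := by
  obtain ⟨t, ht, hinner⟩ := exists_inner_sub_nonpos_of_mem_convexHull hx a
  exact ⟨t, ht, by rw [norm_add_sq_real]; linarith⟩

lemma exists_norm_nsmul_sub_sum_sq_le (hx : x ∈ convexHull ℝ T) {r : ℝ}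
    (hr : ∀ t ∈ T, ‖x - t‖ ≤ r) (s : ℕ) :
    ∃ p : Fin s → E, (∀ i, p i ∈ T) ∧ ‖s • x - ∑ i, p i‖ ^ 2 ≤ s * r ^ 2 := by
  induction s with
  | zero => exact ⟨Fin.elim0, fun i => i.elim0, by simp⟩
  | succ s ih =>
    obtain ⟨p, hpT, hp⟩ := ih
    obtain ⟨t, ht, hle⟩ := exists_norm_add_sub_sq_le_of_mem_convexHull hx (s • x - ∑ i, p i)
    refine ⟨Fin.cons t p, fun i => Fin.cases (by simpa) (by simpa) i, ?_⟩
    have hsplit : (s + 1) • x - ∑ i, (Fin.cons t p : Fin (s + 1) → E) i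
        = (s • x - ∑ i, p i) + (x - t) := by
      simp only [add_smul, one_smul, Fin.sum_univ_succ, Fin.cons_zero, Fin.cons_succ]
      abel
    have hxt : ‖x - t‖ ^ 2 ≤ r ^ 2 := pow_le_pow_left₀ (norm_nonneg _) (hr t ht) 2
    rw [hsplit]
    push_cast
    linarith

lemma norm_sub_le_of_mem_convexHull {D : ℝ} (hD : ∀ y ∈ T, ∀ z ∈ T, ‖y - z‖ ≤ D)
    (hx : x ∈ convexHull ℝ T) {t : E} (ht : t ∈ T) : ‖x - t‖ ≤ D := by
  obtain ⟨y, hy, hxy⟩ := convexHull_exists_dist_ge hx t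
  rw [dist_eq_norm, dist_eq_norm] at hxy
  exact hxy.trans (hD y hy t ht)

theorem exists_norm_sub_inv_smul_sum_le (hx : x ∈ convexHull ℝ T) {r : ℝ}
    (hr : ∀ t ∈ T, ‖x - t‖ ≤ r) {s : ℕ} (hs : 0 < s) :
    ∃ p : Fin s → E, (∀ i, p i ∈ T) ∧
      ‖x - (s : ℝ)⁻¹ • ∑ i, p i‖ ≤ r / Real.sqrt s := by
  obtain ⟨t, ht⟩ := convexHull_nonempty_iff.1 ⟨x, hx⟩
  have hr₀ : 0 ≤ r := (norm_nonneg _).trans (hr t ht)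
  obtain ⟨p, hpT, hp⟩ := exists_norm_nsmul_sub_sum_sq_le hx hr s
  refine ⟨p, hpT, ?_⟩
  have hs' : (0 : ℝ) < s := by exact_mod_cast hs
  have : x - (s : ℝ)⁻¹ • ∑ i, p i = (s : ℝ)⁻¹ • (s • x - ∑ i, p i) := by
    rw [smul_sub, ← Nat.cast_smul_eq_nsmul ℝ, inv_smul_smul₀ hs'.ne']
  rw [this, norm_smul, Real.norm_of_nonneg (by positivity)]
  have hnorm : ‖s • x - ∑ i, p i‖ ≤ Real.sqrt s * r := by
    rw [← Real.sqrt_sq hr₀, ← Real.sqrt_mul hs'.le]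
    exact Real.le_sqrt_of_sq_le hp
  calc (s : ℝ)⁻¹ * ‖s • x - ∑ i, p i‖ ≤ (s : ℝ)⁻¹ * (Real.sqrt s * r) := by gcongr
    _ = r / Real.sqrt s := by
      have hsqrt : 0 < Real.sqrt s := Real.sqrt_pos.2 hs'
      field_simp
      rw [Real.sq_sqrt hs'.le]

end Maurey

lemma l2_eq_norm_toLp {ι : Type*} [Fintype ι] (v : ι → ℝ) :
    l2 v = ‖WithLp.toLp 2 v‖ := by
  simp [l2, EuclideanSpace.norm_eq]

/-- Approximate Carathéodory (Maurey's empirical method). -/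
theorem approx_caratheodory {n : ℕ} (T : Set (Fin n → ℝ))
    (hdiam : ∀ y ∈ T, ∀ z ∈ T, l2 (y - z) ≤ 1)
    (x : Fin n → ℝ) (hx : x ∈ convexHull ℝ T) (s : ℕ) (hs : 0 < s) :
    ∃ p : Fin s → (Fin n → ℝ), (∀ i, p i ∈ T) ∧
      l2 (x - (s : ℝ)⁻¹ • ∑ i, p i) ≤ 1 / Real.sqrt s := by
  have hx' : WithLp.toLp 2 x ∈ convexHull ℝ (WithLp.toLp 2 '' T) := by
    have h := (WithLp.linearEquiv 2 ℝ (Fin n → ℝ)).symm.toLinearMap.image_convexHull T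
    rw [LinearEquiv.coe_toLinearMap, WithLp.coe_symm_linearEquiv] at h
    exact h ▸ Set.mem_image_of_mem _ hx
  have hdiam' : ∀ y ∈ WithLp.toLp 2 '' T, ∀ z ∈ WithLp.toLp 2 '' T, ‖y - z‖ ≤ 1 := by
    rintro _ ⟨y, hy, rfl⟩ _ ⟨z, hz, rfl⟩
    rw [← WithLp.toLp_sub, ← l2_eq_norm_toLp]
    exact hdiam y hy z hz
  obtain ⟨p, hpT, hp⟩ := exists_norm_sub_inv_smul_sum_le hx'
    (fun _ ht => norm_sub_le_of_mem_convexHull hdiam' hx' ht) hs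
  refine ⟨fun i => (p i).ofLp, fun i => ?_, ?_⟩
  · obtain ⟨y, hy, hpy⟩ := hpT i
    simpa [← hpy] using hy
  · rw [l2_eq_norm_toLp]
    simpa using hp
end

section
/- (RIP implies RNO.) Let X ∈ ℝ^{n×d} satisfy the (2s, δ)-restricted isometry property with 0 ≤ δ < 1. Then for every subset S ⊆ [d], the matrix X satisfies the (s, S, 4δ/(1−δ)²)-restricted normalized orthogonality condition. -/
open Finset ProbabilityTheory MeasureTheory

noncomputable def l1 {ι : Type*} [Fintype ι] (v : ι → ℝ) : ℝ := ∑ j, |v j|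

noncomputable def ip {ι : Type*} [Fintype ι] (u v : ι → ℝ) : ℝ := ∑ j, u j * v j

def restr {ι : Type*} [DecidableEq ι] (S : Finset ι) (v : ι → ℝ) : ι → ℝ :=
  fun j => if j ∈ S then v j else 0

def sparse {ι : Type*} (s : ℕ) (v : ι → ℝ) : Prop :=
  ∃ T : Finset ι, T.card ≤ s ∧ ∀ j ∉ T, v j = 0

def inCone {ι : Type*} [Fintype ι] [DecidableEq ι] (S : Finset ι) (v : ι → ℝ) : Prop :=
  l1 (restr Sᶜ v) ≤ l1 (restr S v)

noncomputable def RE {n : ℕ} {ι : Type*} [Fintype ι] [DecidableEq ι]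
    (X : Matrix (Fin n) ι ℝ) (S' : Finset ι) : ℝ :=
  sInf {r | ∃ β : ι → ℝ, inCone S' β ∧ restr S' β ≠ 0 ∧
    r = (1 / (n : ℝ)) * (l2 (X.mulVec β))^2 / (l2 (restr S' β))^2}

noncomputable def RE' {n : ℕ} {ι : Type*} [Fintype ι] [DecidableEq ι]
    (X : Matrix (Fin n) ι ℝ) (S' : Finset ι) : ℝ :=
  sInf {r | ∃ β : ι → ℝ, inCone S' β ∧ β ≠ 0 ∧
    r = (1 / (n : ℝ)) * (l2 (X.mulVec β))^2 / (l2 β)^2}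

def subMat {n d : ℕ} (X : Matrix (Fin n) (Fin d) ℝ) (S : Finset (Fin d)) :
    Matrix (Fin n) {j // j ∈ S} ℝ :=
  fun i j => X i j.val

def liftSet {d : ℕ} (S S' : Finset (Fin d)) : Finset {j // j ∈ S} :=
  S.attach.filter (fun j => j.val ∈ S')

open Classical in
noncomputable def nip {ι : Type*} [Fintype ι] (u v : ι → ℝ) : ℝ :=
  if u = 0 ∨ v = 0 then 0 else ip u v / (l2 u * l2 v)

def RNO {n d : ℕ} (s : ℕ) (X : Matrix (Fin n) (Fin d) ℝ) (S : Finset (Fin d)) (ε : ℝ) : Prop :=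
  ∀ (α : {j // j ∈ S} → ℝ) (β : {j // j ∈ Sᶜ} → ℝ), sparse s α → sparse s β →
    |nip ((subMat X S).mulVec α) ((subMat X Sᶜ).mulVec β)| ≤ ε

def RIP {n d : ℕ} (t : ℕ) (δ : ℝ) (X : Matrix (Fin n) (Fin d) ℝ) : Prop :=
  ∀ β : Fin d → ℝ, sparse t β →
    (1 - δ) * l2 β ≤ l2 (X.mulVec β) ∧ l2 (X.mulVec β) ≤ (1 + δ) * l2 β

lemma l2_nonneg {ι : Type*} [Fintype ι] (v : ι → ℝ) : 0 ≤ l2 v := Real.sqrt_nonneg _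

lemma l2_sq {ι : Type*} [Fintype ι] (v : ι → ℝ) : (l2 v)^2 = ∑ j, (v j)^2 :=
  Real.sq_sqrt (Finset.sum_nonneg fun j _ => sq_nonneg _)

lemma l2_eq_zero_iff {ι : Type*} [Fintype ι] (v : ι → ℝ) : l2 v = 0 ↔ v = 0 := by
  constructor
  · intro hv
    have h2 : ∑ j, (v j)^2 = 0 := by
      have := l2_sq v; rw [hv] at this; simpa using this.symm
    funext j
    have := (Finset.sum_eq_zero_iff_of_nonneg (fun j _ => sq_nonneg (v j))).1 h2 j
      (Finset.mem_univ j)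
    exact pow_eq_zero_iff (n := 2) (by norm_num) |>.1 this
  · intro hv; subst hv; simp [l2]

lemma l2_pos_of_ne {ι : Type*} [Fintype ι] {v : ι → ℝ} (h : v ≠ 0) : 0 < l2 v :=
  lt_of_le_of_ne (l2_nonneg v) (fun he => h ((l2_eq_zero_iff v).1 he.symm))

lemma ip_polar {ι : Type*} [Fintype ι] (x y : ι → ℝ) :
    ip x y = ((l2 (x + y))^2 - (l2 (x - y))^2) / 4 := by
  rw [l2_sq, l2_sq, ← Finset.sum_sub_distrib, ip,
    eq_div_iff (by norm_num : (4:ℝ) ≠ 0), Finset.sum_mul]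
  exact Finset.sum_congr rfl fun j _ => by simp only [Pi.add_apply, Pi.sub_apply]; ring

lemma l2_smul {ι : Type*} [Fintype ι] (c : ℝ) (hc : 0 ≤ c) (v : ι → ℝ) :
    l2 (fun j => c * v j) = c * l2 v := by
  simp only [l2, mul_pow, ← Finset.mul_sum]
  rw [Real.sqrt_mul (by positivity), Real.sqrt_sq hc]

lemma mulVec_smul' {n d : ℕ} (X : Matrix (Fin n) (Fin d) ℝ) (c : ℝ) (w : Fin d → ℝ) :
    X.mulVec (fun j => c * w j) = fun i => c * X.mulVec w i := by
  funext i
  simp only [Matrix.mulVec, dotProduct, Finset.mul_sum]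
  exact Finset.sum_congr rfl (fun j _ => by ring)

lemma l2_add_sq_of_disj {ι : Type*} [Fintype ι] {x y : ι → ℝ}
    (hxy : ∀ j, x j * y j = 0) :
    (l2 (x + y))^2 = (l2 x)^2 + (l2 y)^2 ∧ (l2 (x - y))^2 = (l2 x)^2 + (l2 y)^2 := by
  rw [l2_sq, l2_sq, l2_sq, l2_sq, ← Finset.sum_add_distrib]
  constructor <;>
    refine Finset.sum_congr rfl fun j _ => ?_ <;>
    · simp only [Pi.add_apply, Pi.sub_apply]
      have := hxy j; nlinarith [hxy j]

set_option maxHeartbeats 1000000 in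
/-- RIP implies RNO. -/
theorem rip_implies_rno {n d : ℕ} (s : ℕ) (δ : ℝ) (hδ0 : 0 ≤ δ) (hδ1 : δ < 1)
    (X : Matrix (Fin n) (Fin d) ℝ) (h : RIP (2 * s) δ X) :
    ∀ S : Finset (Fin d), RNO s X S (4 * δ / (1 - δ)^2) := by
  intro S α β hα hβ
  classical
  have h1δ : (0:ℝ) < 1 - δ := by linarith
  have hε : 0 ≤ 4 * δ / (1 - δ)^2 := by positivity
  set u := (subMat X S).mulVec α with hu_def
  set v := (subMat X Sᶜ).mulVec β with hv_def
  by_cases h0 : u = 0 ∨ v = 0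
  · rw [nip, if_pos h0]; simpa using hε
  push_neg at h0
  obtain ⟨hu, hv⟩ := h0
  -- extended vectors on Fin d
  set a : Fin d → ℝ := fun j => if hj : j ∈ S then α ⟨j, hj⟩ else 0 with ha_def
  set b : Fin d → ℝ := fun j => if hj : j ∈ Sᶜ then β ⟨j, hj⟩ else 0 with hb_def
  have hXa : X.mulVec a = u := by
    funext i
    show ∑ j, X i j * a j = ∑ j, subMat X S i j * α j
    rw [show (∑ j, X i j * a j) = ∑ j ∈ S, X i j * a j from
      (Finset.sum_subset (Finset.subset_univ S) (fun j _ hj => by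
        simp [ha_def, dif_neg hj])).symm]
    rw [← Finset.sum_attach S (fun j => X i j * a j), Finset.univ_eq_attach]
    exact Finset.sum_congr rfl fun j _ => by simp [ha_def, dif_pos j.2, subMat]
  have hXb : X.mulVec b = v := by
    funext i
    show ∑ j, X i j * b j = ∑ j, subMat X Sᶜ i j * β j
    rw [show (∑ j, X i j * b j) = ∑ j ∈ Sᶜ, X i j * b j from
      (Finset.sum_subset (Finset.subset_univ Sᶜ) (fun j _ hj => by
        simp only [hb_def]; rw [dif_neg hj, mul_zero])).symm]
    rw [← Finset.sum_attach Sᶜ (fun j => X i j * b j), Finset.univ_eq_attach]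
    refine Finset.sum_congr rfl fun j _ => ?_
    simp only [hb_def, subMat]
    rw [dif_pos j.2]
  obtain ⟨Ta, hTa, hTa0⟩ := hα
  obtain ⟨Tb, hTb, hTb0⟩ := hβ
  have ha_sp : ∀ j ∉ Ta.image Subtype.val, a j = 0 := by
    intro j hj
    by_cases hjS : j ∈ S
    · have : (⟨j, hjS⟩ : {x // x ∈ S}) ∉ Ta := fun hmem =>
        hj (Finset.mem_image.2 ⟨⟨j, hjS⟩, hmem, rfl⟩)
      simp [ha_def, dif_pos hjS, hTa0 _ this]
    · simp [ha_def, dif_neg hjS]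
  have hb_sp : ∀ j ∉ Tb.image Subtype.val, b j = 0 := by
    intro j hj
    by_cases hjS : j ∈ Sᶜ
    · have : (⟨j, hjS⟩ : {x // x ∈ Sᶜ}) ∉ Tb := fun hmem =>
        hj (Finset.mem_image.2 ⟨⟨j, hjS⟩, hmem, rfl⟩)
      simp only [hb_def]; rw [dif_pos hjS]; exact hTb0 _ this
    · simp only [hb_def]; rw [dif_neg hjS]
  have hane : a ≠ 0 := fun he => hu (by rw [← hXa, he, Matrix.mulVec_zero])
  have hbne : b ≠ 0 := fun he => hv (by rw [← hXb, he, Matrix.mulVec_zero])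
  set la := l2 a with hla_def
  set lb := l2 b with hlb_def
  have hla : 0 < la := l2_pos_of_ne hane
  have hlb : 0 < lb := l2_pos_of_ne hbne
  -- normalized vectors
  set a' : Fin d → ℝ := fun j => (1/la) * a j with ha'_def
  set b' : Fin d → ℝ := fun j => (1/lb) * b j with hb'_def
  have hla' : l2 a' = 1 := by
    rw [ha'_def, l2_smul _ (by positivity), one_div, inv_mul_cancel₀ hla.ne']
  have hlb' : l2 b' = 1 := by
    rw [hb'_def, l2_smul _ (by positivity), one_div, inv_mul_cancel₀ hlb.ne']
  have hdisj : ∀ j, a' j * b' j = 0 := by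
    intro j
    by_cases hjS : j ∈ S
    · have : b j = 0 := by
        simp only [hb_def]; rw [dif_neg (fun hc => (Finset.mem_compl.1 hc) hjS)]
      simp [ha'_def, hb'_def, this]
    · have : a j = 0 := by simp [ha_def, dif_neg hjS]
      simp [ha'_def, hb'_def, this]
  -- sparsity of a' ± b'
  have hsum_sp : sparse (2*s) (a' + b') ∧ sparse (2*s) (a' - b') := by
    have hcard : (Ta.image Subtype.val ∪ Tb.image Subtype.val).card ≤ 2*s := by
      calc (Ta.image Subtype.val ∪ Tb.image Subtype.val).card
          ≤ (Ta.image Subtype.val).card + (Tb.image Subtype.val).card :=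
            Finset.card_union_le _ _
        _ ≤ Ta.card + Tb.card := by
            gcongr <;> exact Finset.card_image_le
        _ ≤ 2*s := by omega
    have hz : ∀ j ∉ Ta.image Subtype.val ∪ Tb.image Subtype.val, a' j = 0 ∧ b' j = 0 := by
      intro j hj
      rw [Finset.mem_union] at hj; push_neg at hj
      constructor
      · simp [ha'_def, ha_sp j hj.1]
      · simp [hb'_def, hb_sp j hj.2]
    exact ⟨⟨_, hcard, fun j hj => by simp [(hz j hj).1, (hz j hj).2]⟩,
           ⟨_, hcard, fun j hj => by simp [(hz j hj).1, (hz j hj).2]⟩⟩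
  have ha'_sp : sparse (2*s) a' := by
    refine ⟨Ta.image Subtype.val, le_trans Finset.card_image_le (by omega), ?_⟩
    intro j hj; simp [ha'_def, ha_sp j hj]
  have hb'_sp : sparse (2*s) b' := by
    refine ⟨Tb.image Subtype.val, le_trans Finset.card_image_le (by omega), ?_⟩
    intro j hj; simp [hb'_def, hb_sp j hj]
  -- norms of a' ± b'
  obtain ⟨hps, hms⟩ := l2_add_sq_of_disj hdisj
  rw [hla', hlb'] at hps hms
  norm_num at hps hms
  -- the key inner product bound via polarization and RIP
  set A := l2 (X.mulVec a') with hA_def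
  set B := l2 (X.mulVec b') with hB_def
  have hA1 : 1 - δ ≤ A := by
    have := (h a' ha'_sp).1; rwa [hla', mul_one] at this
  have hB1 : 1 - δ ≤ B := by
    have := (h b' hb'_sp).1; rwa [hlb', mul_one] at this
  have hApos : 0 < A := lt_of_lt_of_le h1δ hA1
  have hBpos : 0 < B := lt_of_lt_of_le h1δ hB1
  set I := ip (X.mulVec a') (X.mulVec b') with hI_def
  have hIbound : |I| ≤ 2 * δ := by
    have hpolar : I = ((l2 (X.mulVec (a' + b')))^2 - (l2 (X.mulVec (a' - b')))^2) / 4 := by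
      rw [hI_def, ip_polar, Matrix.mulVec_add, Matrix.mulVec_sub]
    have hup := (h (a' + b') hsum_sp.1).2
    have hlo := (h (a' - b') hsum_sp.2).1
    have hup2 : (l2 (X.mulVec (a' + b')))^2 ≤ (1+δ)^2 * 2 := by
      have := pow_le_pow_left₀ (l2_nonneg _) hup 2
      calc (l2 (X.mulVec (a' + b')))^2 ≤ ((1+δ) * l2 (a'+b'))^2 := this
        _ = (1+δ)^2 * (l2 (a'+b'))^2 := by ring
        _ = (1+δ)^2 * 2 := by rw [hps]
    have hlo2 : (1-δ)^2 * 2 ≤ (l2 (X.mulVec (a' - b')))^2 := by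
      have hge : 0 ≤ (1-δ) * l2 (a'-b') := mul_nonneg h1δ.le (l2_nonneg _)
      have := pow_le_pow_left₀ hge hlo 2
      calc (1-δ)^2 * 2 = (1-δ)^2 * (l2 (a'-b'))^2 := by rw [hms]
        _ = ((1-δ) * l2 (a'-b'))^2 := by ring
        _ ≤ (l2 (X.mulVec (a'-b')))^2 := this
    have hup2' : (l2 (X.mulVec (a' - b')))^2 ≤ (1+δ)^2 * 2 := by
      have hup' := (h (a' - b') hsum_sp.2).2
      have := pow_le_pow_left₀ (l2_nonneg _) hup' 2
      calc (l2 (X.mulVec (a' - b')))^2 ≤ ((1+δ) * l2 (a'-b'))^2 := this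
        _ = (1+δ)^2 * (l2 (a'-b'))^2 := by ring
        _ = (1+δ)^2 * 2 := by rw [hms]
    have hlo2' : (1-δ)^2 * 2 ≤ (l2 (X.mulVec (a' + b')))^2 := by
      have hlo' := (h (a' + b') hsum_sp.1).1
      have hge : 0 ≤ (1-δ) * l2 (a'+b') := mul_nonneg h1δ.le (l2_nonneg _)
      have := pow_le_pow_left₀ hge hlo' 2
      calc (1-δ)^2 * 2 = (1-δ)^2 * (l2 (a'+b'))^2 := by rw [hps]
        _ = ((1-δ) * l2 (a'+b'))^2 := by ring
        _ ≤ (l2 (X.mulVec (a'+b')))^2 := this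
    rw [abs_le]
    constructor <;> rw [hpolar] <;> nlinarith
  -- relate nip u v to I / (A * B)
  have hXa' : X.mulVec a' = fun i => (1/la) * u i := by
    rw [ha'_def, mulVec_smul' X (1/la) a, hXa]
  have hXb' : X.mulVec b' = fun i => (1/lb) * v i := by
    rw [hb'_def, mulVec_smul' X (1/lb) b, hXb]
  have hAu : A = (1/la) * l2 u := by rw [hA_def, hXa', l2_smul _ (by positivity)]
  have hBv : B = (1/lb) * l2 v := by rw [hB_def, hXb', l2_smul _ (by positivity)]
  have hIuv : I = (1/la) * (1/lb) * ip u v := by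
    rw [hI_def, hXa', hXb', ip]
    simp only [ip, Finset.mul_sum]
    exact Finset.sum_congr rfl fun i _ => by ring
  have hl2u : 0 < l2 u := l2_pos_of_ne hu
  have hl2v : 0 < l2 v := l2_pos_of_ne hv
  have hnip : nip u v = I / (A * B) := by
    rw [nip, if_neg (by push_neg; exact ⟨hu, hv⟩), hIuv, hAu, hBv]
    field_simp
  rw [hnip, abs_div, abs_of_pos (mul_pos hApos hBpos)]
  calc |I| / (A * B) ≤ (2 * δ) / ((1-δ) * (1-δ)) := by
        apply div_le_div₀ (by positivity) hIbound (by positivity)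
        exact mul_le_mul hA1 hB1 h1δ.le hApos.le
    _ ≤ 4 * δ / (1 - δ)^2 := by
        rw [show (1-δ)*(1-δ) = (1-δ)^2 by ring]
        gcongr
        linarith
end
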